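/- arXiv:2605.07932 — 2 statements merged into one kernel-verified Lean document; each statement's English description precedes it below -/
import Mathlib

section
/- For real numbers R > 0, ρ ≥ 0, and θ ∈ (0, π/2], the relation cot θ = sinh(ρ/R) holds if and only if tan(θ/2) = exp(-ρ/R). -/
theorem stmt6 (R ρ θ : ℝ) (hR : 0 < R) (hρ : 0 ≤ ρ)
    (hθ1 : 0 < θ) (hθ2 : θ ≤ Real.pi / 2) :
    Real.cos θ / Real.sin θ = Real.sinh (ρ / R) ↔
      Real.tan (θ / 2) = Real.exp (-ρ / R) := by
  have hπ := Real.pi_pos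
  set x := ρ / R with hxdef
  have hx : 0 ≤ x := div_nonneg hρ hR.le
  set h := θ / 2 with hhdef
  have hh1 : 0 < h := by positivity
  have hh2 : h < Real.pi / 2 := by
    rw [hhdef]; linarith
  have hch : 0 < Real.cos h := Real.cos_pos_of_mem_Ioo ⟨by linarith, hh2⟩
  have hsh : 0 < Real.sin h := Real.sin_pos_of_pos_of_lt_pi hh1 (by linarith)
  set t := Real.tan h with htdef
  have ht : 0 < t := div_pos hsh hch |>.trans_eq (Real.tan_eq_sin_div_cos h).symm
  set s := Real.exp (-x) with hsdef
  have hs : 0 < s := Real.exp_pos _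
  have hss : Real.exp x = s⁻¹ := by
    rw [hsdef, ← Real.exp_neg, neg_neg]
  have key : Real.cos θ / Real.sin θ = (1 - t ^ 2) / (2 * t) := by
    have hθeq : θ = 2 * h := by rw [hhdef]; ring
    rw [hθeq, Real.cos_two_mul, Real.sin_two_mul, htdef, Real.tan_eq_sin_div_cos]
    have hpy := Real.sin_sq_add_cos_sq h
    field_simp
    linear_combination hpy
  have hsinh : Real.sinh x = (s⁻¹ - s) / 2 := by
    rw [Real.sinh_eq, hss, hsdef]
  clear_value t s
  rw [key, hsinh, show -ρ / R = -x by rw [hxdef]; ring, ← hsdef]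
  constructor
  · intro H
    have H' : (1 - t ^ 2) * s = (1 - s ^ 2) * t := by
      field_simp at H
      nlinarith [H]
    have hz : (s - t) * (1 + s * t) = 0 := by nlinarith [H']
    rcases mul_eq_zero.mp hz with h0 | h0
    · linarith
    · nlinarith [mul_pos hs ht]
  · intro H
    rw [H]
    field_simp
end

section
/- Let u, v : ℝ → ℝ be twice differentiable with v' nowhere zero, and suppose u'(t) * v''(t) - v'(t) * u''(t) = 0 for all t. Then there exist constants C and D such that u(t) = C * v(t) + D for all t. -/
theorem stmt19 (u v u' v' u'' v'' : ℝ → ℝ)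
    (hu' : ∀ t, HasDerivAt u (u' t) t) (hv' : ∀ t, HasDerivAt v (v' t) t)
    (hu'' : ∀ t, HasDerivAt u' (u'' t) t) (hv'' : ∀ t, HasDerivAt v' (v'' t) t)
    (hv'0 : ∀ t, v' t ≠ 0)
    (h : ∀ t, u' t * v'' t - v' t * u'' t = 0) :
    ∃ C D : ℝ, ∀ t, u t = C * v t + D := by
  have hq : ∀ t, HasDerivAt (fun t => u' t / v' t) 0 t := by
    intro t
    have hd := (hu'' t).div (hv'' t) (hv'0 t)
    have heq : (u'' t * v' t - u' t * v'' t) / (v' t) ^ 2 = 0 := by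
      have := h t
      have : u'' t * v' t - u' t * v'' t = 0 := by linarith
      rw [this, zero_div]
    rwa [heq] at hd
  have hqc : ∀ t, u' t / v' t = u' 0 / v' 0 := fun t =>
    is_const_of_deriv_eq_zero (fun t => (hq t).differentiableAt)
      (fun t => (hq t).deriv) t 0
  set C := u' 0 / v' 0 with hC
  have hu'eq : ∀ t, u' t = C * v' t := by
    intro t
    have := hqc t
    rw [div_eq_iff (hv'0 t)] at this
    linarith
  have hg : ∀ t, HasDerivAt (fun t => u t - C * v t) 0 t := by
    intro t
    have := (hu' t).sub ((hv' t).const_mul C)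
    rw [hu'eq t] at this
    simp only [sub_self] at this
    exact this
  have key : ∀ t, u t - C * v t = u 0 - C * v 0 := fun t =>
    is_const_of_deriv_eq_zero (fun t => (hg t).differentiableAt)
      (fun t => (hg t).deriv) t 0
  exact ⟨C, u 0 - C * v 0, fun t => by linarith [key t]⟩
end
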